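/- arXiv:1603.03765 — 6 statements merged into one kernel-verified Lean document; each statement's English description precedes it below -/
import Mathlib

section
/- For all positive integers q and m, F_{(2m+1)q} = F_q · [(-1)^{mq} + ∑_{k=0}^{m-1} (-1)^{kq} · L_{2(m-k)q}], where the identity is understood in the integers. -/
/-- The Lucas numbers: L 0 = 2, L 1 = 1, L (n+2) = L n + L (n+1). -/
def lucas : ℕ → ℕ
  | 0 => 2
  | 1 => 1
  | n + 2 => lucas n + lucas (n + 1)

lemma lucas_eq (n : ℕ) : lucas (n + 1) = Nat.fib n + Nat.fib (n + 2) := by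
  induction n using Nat.twoStepInduction with
  | zero => rfl
  | one => rfl
  | more n h1 h2 =>
    have h2' : lucas (n + 2) = Nat.fib (n + 1) + Nat.fib (n + 3) := h2
    have a : Nat.fib (n + 2) = Nat.fib n + Nat.fib (n + 1) := Nat.fib_add_two
    have b : Nat.fib (n + 3) = Nat.fib (n + 1) + Nat.fib (n + 2) := Nat.fib_add_two
    have c : Nat.fib (n + 4) = Nat.fib (n + 2) + Nat.fib (n + 3) := Nat.fib_add_two
    show lucas (n + 1) + lucas (n + 2) = Nat.fib (n + 2) + Nat.fib (n + 4)
    omega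

lemma cassini (n : ℕ) : (Nat.fib (n+1) : ℤ)^2 = Nat.fib n * Nat.fib (n+2) + (-1)^n := by
  induction n with
  | zero => simp
  | succ n ih =>
    have h1 : (Nat.fib (n+2) : ℤ) = Nat.fib n + Nat.fib (n+1) := by
      rw [Nat.fib_add_two]; push_cast; ring
    have h2 : (Nat.fib (n+3) : ℤ) = Nat.fib (n+1) + Nat.fib (n+2) := by
      rw [show n+3 = (n+1)+2 from rfl, Nat.fib_add_two]; push_cast; ring
    show (Nat.fib (n+2) : ℤ)^2 = Nat.fib (n+1) * Nat.fib (n+3) + (-1)^(n+1)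
    rw [h2, h1]
    rw [h1] at ih
    linear_combination -ih

lemma key (q t : ℕ) : (Nat.fib (t + 2*(q+1)) : ℤ) =
    (-1)^(q+1) * Nat.fib t + Nat.fib (q+1) * (Nat.fib (t+q) + Nat.fib (t+q+2)) := by
  induction t using Nat.twoStepInduction with
  | zero =>
    have h : 0 + 2*(q+1) = (q+1) + q + 1 := by ring
    rw [h, Nat.fib_add (q+1) q]
    simp only [show q+1+1 = q+2 from rfl, Nat.fib_zero]
    push_cast
    ring
  | one =>
    have h : 1 + 2*(q+1) = (q+1) + (q+1) + 1 := by ring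
    rw [h, Nat.fib_add (q+1) (q+1)]
    have hc := cassini (q+1)
    simp only [show q+1+1 = q+2 from rfl, show q+1+2 = q+3 from rfl] at hc
    rw [show 1+q = q+1 from by ring, show q+1+2 = q+3 from rfl]
    push_cast
    simp only [Nat.fib_one]
    push_cast
    linear_combination hc
  | more t h1 h2 =>
    have e1 : t + 2 + 2*(q+1) = (t + 2*(q+1)) + 2 := by ring
    have e2 : t + 2 + q = (t + q) + 2 := by ring
    rw [e1, e2, Nat.fib_add_two (n := t + 2*(q+1)),
      Nat.fib_add_two (n := t+q), Nat.fib_add_two (n := t),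
      Nat.fib_add_two (n := t+q+2)]
    simp only [show t+q+2+1 = t+q+3 from rfl] at *
    simp only [show t+1+2*(q+1) = t+2*(q+1)+1 from by ring,
      show t+1+q = t+q+1 from by ring, show t+1+q+2 = t+q+3 from by ring] at h2
    push_cast at h1 h2 ⊢
    linear_combination h1 + h2

theorem stmt2 (q m : ℕ) (hq : 0 < q) (hm : 0 < m) :
    (Nat.fib ((2 * m + 1) * q) : ℤ) =
      (Nat.fib q : ℤ) *
        ((-1) ^ (m * q) +
          ∑ k ∈ Finset.range m, (-1) ^ (k * q) * (lucas (2 * (m - k) * q) : ℤ)) := by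
  clear hm
  induction m with
  | zero => simp
  | succ m ih =>
    rw [Finset.sum_range_succ']
    have hshift : ∀ k ∈ Finset.range m,
        ((-1:ℤ)) ^ ((k+1) * q) * (lucas (2 * (m + 1 - (k+1)) * q) : ℤ)
        = (-1)^q * ((-1) ^ (k * q) * (lucas (2 * (m - k) * q) : ℤ)) := by
      intro k _
      have : m + 1 - (k+1) = m - k := by omega
      rw [this, add_mul, pow_add]; ring
    rw [Finset.sum_congr rfl hshift, ← Finset.mul_sum]
    simp only [Nat.sub_zero, Nat.mul_zero, pow_zero, one_mul, Nat.zero_mul]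
    obtain ⟨q', rfl⟩ : ∃ q', q = q' + 1 := ⟨q - 1, by omega⟩
    have hn : 2 * (m+1) * (q'+1) = ((2*m+1)*(q'+1) + q') + 1 := by ring
    have hl : (lucas (2 * (m+1) * (q'+1)) : ℤ)
        = Nat.fib ((2*m+1)*(q'+1) + q') + Nat.fib ((2*m+1)*(q'+1) + q' + 2) := by
      rw [hn, lucas_eq]; push_cast; ring
    have hk := key q' ((2*m+1)*(q'+1))
    rw [show (2*m+1)*(q'+1) + 2*(q'+1) = (2*(m+1)+1)*(q'+1) from by ring] at hk
    rw [hk, hl, ih]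
    rw [show (m+1) * (q'+1) = m * (q'+1) + (q'+1) from by ring, pow_add]
    ring
end

section
/- For all positive integers q and m, L_{(2m+1)q} = L_q · [(-1)^{m(q+1)} + ∑_{k=0}^{m-1} (-1)^{k(q+1)} · L_{2(m-k)q}], where the identity is understood in the integers. -/
lemma lucasZ_two (n : ℕ) : (lucas (n + 2) : ℤ) = lucas n + lucas (n + 1) := by
  show ((lucas n + lucas (n+1) : ℕ) : ℤ) = _
  push_cast; ring

lemma lucas_det (q : ℕ) :
    (lucas q : ℤ) * lucas (q + 2) - (lucas (q + 1) : ℤ) ^ 2 = 5 * (-1) ^ q := by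
  induction q with
  | zero => norm_num [lucas]
  | succ n ih =>
    have h2 := lucasZ_two n
    have h3 := lucasZ_two (n + 1)
    rw [show n + 1 + 1 = n + 2 from rfl] at h3
    rw [h2] at ih
    rw [h3, h2]
    linear_combination -ih

lemma lucas_sq (q : ℕ) :
    (lucas (2 * q) : ℤ) = lucas q * lucas q - 2 * (-1) ^ q ∧
      (lucas (2 * q + 1) : ℤ) = lucas q * lucas (q + 1) - (-1) ^ q := by
  induction q with
  | zero => norm_num [lucas]
  | succ n ih =>
    obtain ⟨h0, h1⟩ := ih
    have hd := lucas_det n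
    have r3 := lucasZ_two n
    rw [r3] at hd
    have r1 := lucasZ_two (2 * n)
    have r2 := lucasZ_two (2 * n + 1)
    constructor
    · rw [show 2 * (n + 1) = 2 * n + 2 from by ring, r1, h0, h1]
      linear_combination hd
    · rw [show 2 * (n + 1) + 1 = 2 * n + 1 + 2 from by ring, r2,
        show 2 * n + 1 + 1 = 2 * n + 2 from rfl, r1, h0, h1,
        show n + 1 + 1 = n + 2 from rfl, r3]
      linear_combination hd

lemma lucas_key (q : ℕ) : ∀ n : ℕ,
    (lucas (n + 2 * q) : ℤ) = lucas q * lucas (n + q) - (-1) ^ q * lucas n := by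
  intro n
  induction n using Nat.twoStepInduction with
  | zero =>
    have := (lucas_sq q).1
    simpa [lucas] using by linarith [this]
  | one =>
    have := (lucas_sq q).2
    rw [show 1 + 2 * q = 2 * q + 1 from by ring, this, show 1 + q = q + 1 from by ring]
    simp [lucas]
  | more n ih1 ih2 =>
    have r1 := lucasZ_two (n + 2 * q)
    have r2 := lucasZ_two (n + q)
    have r3 := lucasZ_two n
    rw [show n + 2 + 2 * q = n + 2 * q + 2 from by ring, r1,
      show n + 1 + 2 * q = n + 2 * q + 1 from by ring] at *
    rw [show n + 2 + q = n + q + 2 from by ring, r2, r3,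
      show n + 1 + q = n + q + 1 from by ring] at *
    rw [ih1, ih2]; ring

theorem stmt3 (q m : ℕ) (hq : 0 < q) (hm : 0 < m) :
    (lucas ((2 * m + 1) * q) : ℤ) =
      (lucas q : ℤ) *
        ((-1) ^ (m * (q + 1)) +
          ∑ k ∈ Finset.range m, (-1) ^ (k * (q + 1)) * (lucas (2 * (m - k) * q) : ℤ)) := by
  induction m, hm using Nat.le_induction with
  | base =>
    have hk := lucas_key q q
    rw [show (2 * 1 + 1) * q = q + 2 * q from by ring, hk, show q + q = 2 * q from (two_mul q).symm]
    simp only [Finset.sum_range_one, Nat.sub_zero, zero_mul, pow_zero, one_mul,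
      Nat.mul_one, Nat.mul_comm 2 1, Nat.one_mul]
    ring
  | succ m hm ih =>
    have hk := lucas_key q ((2 * m + 1) * q)
    have hsum : ∑ k ∈ Finset.range (m + 1),
        (-1 : ℤ) ^ (k * (q + 1)) * (lucas (2 * (m + 1 - k) * q) : ℤ)
        = (-1) ^ (q + 1) * ∑ k ∈ Finset.range m,
            (-1) ^ (k * (q + 1)) * (lucas (2 * (m - k) * q) : ℤ)
          + (lucas (2 * (m + 1) * q) : ℤ) := by
      rw [Finset.sum_range_succ']
      simp only [Nat.succ_sub_succ]
      rw [Finset.mul_sum]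
      congr 1
      · apply Finset.sum_congr rfl
        intro k hk
        rw [show (k + 1) * (q + 1) = q + 1 + k * (q + 1) from by ring, pow_add]
        ring
      · simp
    rw [hsum, show (2 * (m + 1) + 1) * q = (2 * m + 1) * q + 2 * q from by ring, hk,
      show (2 * m + 1) * q + q = 2 * (m + 1) * q from by ring, ih,
      show (m + 1) * (q + 1) = m * (q + 1) + (q + 1) from by ring, pow_add, pow_add, pow_succ]
    ring
end

section
/- For every positive integer m and every n ≥ 1, with p = 2m+1, the Fibonacci number F_{p^n} satisfies F_{(2m+1)^n} = ∏_{j=0}^{n-1} [(-1)^m + ∑_{k=0}^{m-1} (-1)^k · L_{2(m-k)(2m+1)^j}], where the identity is understood in the integers. -/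
/-!
Binet's formulas `F_N = (φ^N - ψ^N) / √5` and `L_N = φ^N + ψ^N` reduce everything to the identity
`a^(2m+1) - b^(2m+1) = (a - b) * ((-1)^m + ∑_{k<m} (-1)^k (a^(2(m-k)) + b^(2(m-k))))`,
valid whenever `a * b = -1`. For odd `N` the numbers `a = φ^N`, `b = ψ^N` satisfy
`a * b = (-1)^N = -1`, which gives `F_{(2m+1)N} = F_N * ((-1)^m + ∑_{k<m} (-1)^k L_{2(m-k)N})`.
Since every power of `2m+1` is odd, iterating this along `N = (2m+1)^j` yields the product formula.
-/

open Real Finset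
open scoped goldenRatio

theorem coe_lucas_eq : ∀ n, (lucas n : ℝ) = φ ^ n + ψ ^ n
  | 0 => by norm_num [lucas]
  | 1 => by simp [lucas, goldenRatio, goldenConj]
  | n + 2 => by
    rw [lucas, Nat.cast_add, coe_lucas_eq n, coe_lucas_eq (n + 1), pow_add φ n 2, pow_add ψ n 2,
      goldenRatio_sq, goldenConj_sq]
    ring

theorem pow_odd_sub_pow_odd_of_mul_eq_neg_one {R : Type*} [CommRing R] {a b : R}
    (hab : a * b = -1) (m : ℕ) :
    a ^ (2 * m + 1) - b ^ (2 * m + 1) =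
      (a - b) *
        ((-1) ^ m + ∑ k ∈ range m, (-1) ^ k * (a ^ (2 * (m - k)) + b ^ (2 * (m - k)))) := by
  induction m with
  | zero => simp
  | succ m ih =>
    have shift : ∑ k ∈ range m, (-1 : R) ^ (k + 1) *
        (a ^ (2 * (m + 1 - (k + 1))) + b ^ (2 * (m + 1 - (k + 1)))) =
        -∑ k ∈ range m, (-1) ^ k * (a ^ (2 * (m - k)) + b ^ (2 * (m - k))) := by
      rw [← sum_neg_distrib]
      refine sum_congr rfl fun k _ => ?_
      rw [Nat.add_sub_add_right, pow_succ]
      ring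
    rw [sum_range_succ', shift]
    simp only [Nat.sub_zero, pow_zero, one_mul]
    linear_combination (a ^ (2 * m + 1) - b ^ (2 * m + 1)) * hab - ih

theorem coe_fib_odd_mul_of_odd (m : ℕ) {N : ℕ} (hN : Odd N) :
    (Nat.fib ((2 * m + 1) * N) : ℤ) =
      Nat.fib N * ((-1) ^ m + ∑ k ∈ range m, (-1) ^ k * (lucas (2 * (m - k) * N) : ℤ)) := by
  have hab : φ ^ N * ψ ^ N = -1 := by
    rw [← mul_pow, goldenRatio_mul_goldenConj, hN.neg_one_pow]
  have hlucas : ∀ k, (lucas (2 * (m - k) * N) : ℝ) =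
      (φ ^ N) ^ (2 * (m - k)) + (ψ ^ N) ^ (2 * (m - k)) :=
    fun k => by rw [coe_lucas_eq, ← pow_mul, ← pow_mul, mul_comm N]
  suffices h : (Nat.fib ((2 * m + 1) * N) : ℝ) =
      Nat.fib N * ((-1) ^ m + ∑ k ∈ range m, (-1) ^ k * (lucas (2 * (m - k) * N) : ℝ)) by
    exact_mod_cast h
  rw [coe_fib_eq, coe_fib_eq, mul_comm _ N, pow_mul, pow_mul,
    pow_odd_sub_pow_odd_of_mul_eq_neg_one hab m]
  simp only [hlucas]
  ring

theorem stmt5_general (m n : ℕ) :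
    (Nat.fib ((2 * m + 1) ^ n) : ℤ) =
      ∏ j ∈ Finset.range n,
        ((-1) ^ m +
          ∑ k ∈ Finset.range m, (-1) ^ k * (lucas (2 * (m - k) * (2 * m + 1) ^ j) : ℤ)) := by
  induction n with
  | zero => simp
  | succ n ih =>
    rw [prod_range_succ, ← ih, pow_succ', coe_fib_odd_mul_of_odd m ((odd_two_mul_add_one m).pow)]

theorem stmt5 (m n : ℕ) (hm : 0 < m) (hn : 1 ≤ n) :
    (Nat.fib ((2 * m + 1) ^ n) : ℤ) =
      ∏ j ∈ Finset.range n,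
        ((-1) ^ m +
          ∑ k ∈ Finset.range m, (-1) ^ k * (lucas (2 * (m - k) * (2 * m + 1) ^ j) : ℤ)) :=
  stmt5_general m n
end

section
/- For every positive integer m and every n ≥ 1, with p = 2m+1, the Lucas number L_{p^n} satisfies L_{(2m+1)^n} = ∏_{j=0}^{n-1} [1 + ∑_{k=0}^{m-1} L_{2(m-k)(2m+1)^j}]. -/
open Real goldenRatio

theorem lucas_eq_goldenRatio_pow_add_goldenConj_pow (n : ℕ) : (lucas n : ℝ) = φ ^ n + ψ ^ n := by
  induction n using Nat.twoStepInduction with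
  | zero => norm_num [lucas]
  | one => simp [lucas, goldenRatio_add_goldenConj]
  | more n ih₀ ih₁ =>
    rw [lucas, Nat.cast_add, ih₀, ih₁, pow_add φ n 2, pow_add ψ n 2, goldenRatio_sq, goldenConj_sq]
    ring

theorem lucas_add_two_mul_of_odd (c : ℕ) {b : ℕ} (hb : Odd b) :
    lucas (c + 2 * b) = lucas (c + b) * lucas b + lucas c := by
  have hφψ : φ ^ b * ψ ^ b = -1 := by rw [← mul_pow, goldenRatio_mul_goldenConj, hb.neg_one_pow]
  suffices (lucas (c + 2 * b) : ℝ) = lucas (c + b) * lucas b + lucas c by exact_mod_cast this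
  simp only [lucas_eq_goldenRatio_pow_add_goldenConj_pow, pow_add, two_mul]
  linear_combination (-φ ^ c - ψ ^ c) * hφψ

theorem lucas_two_mul_add_one_mul_of_odd (m : ℕ) {a : ℕ} (ha : Odd a) :
    lucas ((2 * m + 1) * a) = lucas a * (1 + ∑ k ∈ Finset.range m, lucas (2 * (m - k) * a)) := by
  induction m with
  | zero => simp
  | succ m ih =>
    have hstep := lucas_add_two_mul_of_odd ((2 * m + 1) * a) ha
    rw [show (2 * m + 1) * a + 2 * a = (2 * (m + 1) + 1) * a by ring,
      show (2 * m + 1) * a + a = 2 * (m + 1) * a by ring] at hstep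
    rw [hstep, ih, Finset.sum_range_succ']
    simp only [Nat.add_sub_add_right, Nat.sub_zero]
    ring

theorem stmt6_general (m n : ℕ) :
    lucas ((2 * m + 1) ^ n) =
      ∏ j ∈ Finset.range n,
        (1 + ∑ k ∈ Finset.range m, lucas (2 * (m - k) * (2 * m + 1) ^ j)) := by
  induction n with
  | zero => rfl
  | succ n ih =>
    rw [Finset.prod_range_succ, ← ih, pow_succ', lucas_two_mul_add_one_mul_of_odd m
      (odd_two_mul_add_one m).pow]

theorem stmt6 (m n : ℕ) (hm : 0 < m) (hn : 1 ≤ n) :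
    lucas ((2 * m + 1) ^ n) =
      ∏ j ∈ Finset.range n,
        (1 + ∑ k ∈ Finset.range m, lucas (2 * (m - k) * (2 * m + 1) ^ j)) :=
  stmt6_general m n
end

section
/- For every even positive integer p and all integers n, m ≥ 1, F_{m·p^n} = F_{mp} · ∏_{j=1}^{n-1} [∑_{k=1}^{p/2} L_{(2k-1)·m·p^j}]. -/
open Nat

lemma lucas_add_two (n : ℕ) : lucas (n + 2) = lucas n + lucas (n + 1) := rfl

lemma lucas_add_fib (n : ℕ) : lucas n + fib n = 2 * fib (n + 1) := by
  induction n using Nat.twoStepInduction with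
  | zero => simp [lucas]
  | one => simp [lucas]
  | more n ih1 ih2 =>
    rw [lucas_add_two, fib_add_two, show n + 2 + 1 = (n + 1) + 2 from rfl,
      fib_add_two (n := n + 1)]
    omega

lemma fib_double (n : ℕ) : fib (2 * n) = fib n * lucas n := by
  rw [fib_two_mul]
  have h1 := lucas_add_fib n
  have h2 : 2 * fib (n + 1) - fib n = lucas n := by omega
  rw [h2]

-- Cassini for even index, proved in pair
lemma cassini_pair (k : ℕ) :
    fib (2*k+1)^2 = fib (2*k) * fib (2*k+2) + 1 ∧
    fib (2*k+1) * fib (2*k+3) = fib (2*k+2)^2 + 1 := by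
  induction k with
  | zero => simp [fib_add_two]
  | succ k ih =>
    obtain ⟨h1, h2⟩ := ih
    have h3 : fib (2*k+3) = fib (2*k+1) + fib (2*k+2) := fib_add_two
    have h4 : fib (2*k+4) = fib (2*k+2) + fib (2*k+3) := fib_add_two
    have h5 : fib (2*k+5) = fib (2*k+3) + fib (2*k+4) := fib_add_two
    have g1 : fib (2*k+3)^2 = fib (2*k+2) * fib (2*k+4) + 1 := by nlinarith [h2, h3, h4]
    have g2 : fib (2*k+3) * fib (2*k+5) = fib (2*k+4)^2 + 1 := by nlinarith [g1, h4, h5]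
    constructor
    · convert g1 using 3 <;> ring
    · convert g2 using 3 <;> ring

lemma cassini_even (b : ℕ) (hb : Even b) :
    fib (b+1)^2 = fib b * fib (b+2) + 1 := by
  obtain ⟨k, rfl⟩ := hb
  have := (cassini_pair k).1
  rw [show k + k = 2*k from by ring]
  convert this using 3 <;> ring

-- key identity base 1 : fib(2b+1) = 1 + fib b * lucas (b+1), b even
lemma key_base1 (b : ℕ) (hb : Even b) :
    fib (2*b + 1) = 1 + fib b * lucas (b + 1) := by
  rw [fib_two_mul_add_one]
  have h1 : lucas (b+1) + fib (b+1) = 2 * fib (b+2) := lucas_add_fib (b+1)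
  have h2 := cassini_even b hb
  have h3 : fib (b+2) = fib b + fib (b+1) := fib_add_two
  nlinarith

lemma key_s7 (b : ℕ) (hb : Even b) (c : ℕ) :
    fib (c + 2*b) = fib c + lucas (c + b) * fib b := by
  induction c using Nat.twoStepInduction with
  | zero => simpa [mul_comm] using fib_double b
  | one =>
    rw [show 1 + 2*b = 2*b + 1 from by ring, key_base1 b hb, fib_one,
      show 1 + b = b + 1 from by ring]
    ring
  | more c ih1 ih2 =>
    rw [show c + 2 + 2*b = (c + 2*b) + 2 from by ring, fib_add_two,
      show c + 2*b + 1 = (c+1) + 2*b from by ring, ih1, ih2,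
      show c + 2 + b = (c + b) + 2 from by ring, lucas_add_two,
      fib_add_two (n := c), show c + 1 + b = c + b + 1 from by ring]
    ring

lemma tele (N : ℕ) (hN : Even N) (q : ℕ) :
    fib (2*q*N) = fib N * ∑ k ∈ Finset.Icc 1 q, lucas ((2*k-1)*N) := by
  induction q with
  | zero => simp
  | succ q ih =>
    have e : 2*(q+1)-1 = 2*q+1 := by omega
    rw [show 2*(q+1)*N = 2*q*N + 2*N from by ring, key_s7 N hN, ih,
      Finset.sum_Icc_succ_top (Nat.le_add_left 1 q), e,
      show 2*q*N + N = (2*q+1)*N from by ring]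
    ring

theorem stmt7 (p n m : ℕ) (hp : Even p) (hp' : 0 < p) (hn : 1 ≤ n) (hm : 1 ≤ m) :
    Nat.fib (m * p ^ n) =
      Nat.fib (m * p) *
        ∏ j ∈ Finset.Icc 1 (n - 1),
          ∑ k ∈ Finset.Icc 1 (p / 2), lucas ((2 * k - 1) * m * p ^ j) := by
  induction n, hn using Nat.le_induction with
  | base => simp
  | succ n hn ih =>
    have hN : Even (m * p ^ n) := ((Nat.even_pow.mpr ⟨hp, by omega⟩).mul_left m)
    have hpp : 2 * (p / 2) = p := (Nat.two_mul_div_two_of_even hp)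
    have step : fib (m * p ^ (n+1)) =
        fib (m * p ^ n) * ∑ k ∈ Finset.Icc 1 (p/2), lucas ((2*k-1)*(m * p ^ n)) := by
      have := tele (m * p ^ n) hN (p / 2)
      rw [show 2*(p/2)*(m * p ^ n) = m * p ^ (n+1) by rw [← mul_assoc, hpp]; ring] at this
      exact this
    obtain ⟨n', rfl⟩ : ∃ n', n = n' + 1 := ⟨n - 1, by omega⟩
    rw [step, ih, show n' + 1 + 1 - 1 = n' + 1 from rfl, show n' + 1 - 1 = n' from rfl,
      Finset.prod_Icc_succ_top (Nat.le_add_left 1 n'), mul_assoc]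
    congr 2
    apply Finset.sum_congr rfl
    intro k _
    ring_nf
end

section
/- The series of reciprocals of Fibonacci numbers with index a power of two converges and ∑_{n=0}^∞ 1/F_{2^n} = (7 - √5)/2. -/
/-!
Write `ρ m = F_{m+1} / F_m`. The doubling formulas and Cassini's identity give
`ρ m - ρ (2m) = (-1)^m / F_{2m}`, so for `m = 2^(n+1)` the terms `1 / F_{2^(n+2)}` telescope
along `ρ (2^(n+1))`, which decreases to the golden ratio `φ`. Hence the sum is
`1 + 1 + (ρ 2 - φ) = 4 - φ = (7 - √5) / 2`.
-/

open Filter Topology Finset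
open scoped goldenRatio

namespace Nat

variable {R : Type*} [CommRing R]

theorem cast_fib_succ_sq_sub_fib_succ_mul_fib_sub_fib_sq (n : ℕ) :
    (fib (n + 1) : R) ^ 2 - fib (n + 1) * fib n - fib n ^ 2 = (-1) ^ n := by
  induction n with
  | zero => simp
  | succ n ih =>
    rw [fib_add_two, cast_add, pow_succ]
    linear_combination -ih

theorem cast_fib_succ_mul_fib_two_mul_sub_fib_two_mul_add_one_mul_fib (m : ℕ) :
    (fib (m + 1) : R) * fib (2 * m) - fib (2 * m + 1) * fib m = (-1) ^ m * fib m := by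
  have h2m := congrArg (Nat.cast : ℕ → R) ((fib_add_two (n := 2 * m)).symm.trans
    (fib_two_mul_add_two m))
  rw [fib_two_mul_add_one] at h2m ⊢
  push_cast at h2m ⊢
  linear_combination (fib m : R) * cast_fib_succ_sq_sub_fib_succ_mul_fib_sub_fib_sq (R := R) m
    + (fib (m + 1) : R) * h2m

-- At `m = 0` every denominator is `fib 0 = 0`, so both sides are `0`.
theorem fib_succ_div_fib_sub_fib_two_mul_add_one_div_fib_two_mul
    {K : Type*} [Field K] [CharZero K] (m : ℕ) :
    (fib (m + 1) : K) / fib m - fib (2 * m + 1) / fib (2 * m) = (-1) ^ m / fib (2 * m) := by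
  rcases m.eq_zero_or_pos with rfl | hm
  · simp
  have hfm : (fib m : K) ≠ 0 := by exact_mod_cast (fib_pos.2 hm).ne'
  have hf2m : (fib (2 * m) : K) ≠ 0 := by exact_mod_cast (fib_pos.2 (by omega)).ne'
  field_simp
  linear_combination cast_fib_succ_mul_fib_two_mul_sub_fib_two_mul_add_one_mul_fib (R := K) m

end Nat

theorem Antitone.hasSum_sub_succ {f : ℕ → ℝ} {l : ℝ} (hf : Antitone f)
    (hl : Tendsto f atTop (𝓝 l)) : HasSum (fun n => f n - f (n + 1)) (f 0 - l) := by
  rw [hasSum_iff_tendsto_nat_of_nonneg (fun n => sub_nonneg.2 (hf n.le_succ))]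
  simp_rw [sum_range_sub']
  exact tendsto_const_nhds.sub hl

theorem stmt11 :
    HasSum (fun n : ℕ => 1 / (Nat.fib (2 ^ n) : ℝ)) ((7 - Real.sqrt 5) / 2) := by
  set ρ : ℕ → ℝ := fun m => Nat.fib (m + 1) / Nat.fib m
  have hterm (n : ℕ) : 1 / (Nat.fib (2 ^ (n + 2)) : ℝ) = ρ (2 ^ (n + 1)) - ρ (2 ^ (n + 2)) := by
    rw [pow_succ 2 (n + 1), mul_comm,
      Nat.fib_succ_div_fib_sub_fib_two_mul_add_one_div_fib_two_mul,
      (Nat.even_pow.2 ⟨even_two, n.succ_ne_zero⟩).neg_one_pow]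
  have hanti : Antitone fun n => ρ (2 ^ (n + 1)) :=
    antitone_nat_of_succ_le fun n => sub_nonneg.1 (hterm n ▸ by positivity)
  have hlim : Tendsto (fun n => ρ (2 ^ (n + 1))) atTop (𝓝 φ) :=
    tendsto_fib_succ_div_fib_atTop.comp
      ((tendsto_pow_atTop_atTop_of_one_lt one_lt_two).comp (tendsto_add_atTop_nat 1))
  have hsum := hanti.hasSum_sub_succ hlim
  simp_rw [← hterm] at hsum
  have hval :
      ρ (2 ^ (0 + 1)) - φ = (7 - √5) / 2 - ∑ i ∈ range 2, 1 / (Nat.fib (2 ^ i) : ℝ) := by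
    norm_num [ρ, sum_range_succ, Nat.fib_add_two, Real.goldenRatio]
    ring
  rw [hval] at hsum
  exact (hasSum_nat_add_iff' 2).1 hsum
end
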